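/- arXiv:2202.01288 — 2 statements merged into one kernel-verified Lean document; each statement's English description precedes it below -/
import Mathlib

section
/- Ratio constancy across demonstrators: let p be a distribution on A that is not uniform (i.e., p(a) ≠ 1/n for some a ∈ A), let p' be a distribution on A, and let ρ_1,…,ρ_m, ρ'_1,…,ρ'_m ∈ (0,1]. If noise(p, ρ_i) = noise(p', ρ'_i) for every i ∈ {1,…,m}, then the ratio ρ_i/ρ'_i is independent of i: ρ_i/ρ'_i = ρ_1/ρ'_1 for all i ∈ {1,…,m}. -/
/-- A distribution on a finite action set `A`: nonnegative and summing to 1. -/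
def IsDist {A : Type*} [Fintype A] (p : A → ℝ) : Prop :=
  (∀ a, 0 ≤ p a) ∧ ∑ a, p a = 1

/-- The noised distribution: `noise p ρ (a) = ρ·p(a) + (1−ρ)/n` where `n = |A|`. -/
noncomputable def noise {A : Type*} [Fintype A] (p : A → ℝ) (ρ : ℝ) : A → ℝ :=
  fun a => ρ * p a + (1 - ρ) / (Fintype.card A : ℝ)

/-! Noise scales the deviation `p a - 1/n` from the uniform distribution by `ρ`, so from
`noise p ρ = noise p' ρ'` at a point `a` where `p` is not uniform one reads off
`ρ / ρ' = (p' a - 1/n) / (p a - 1/n)`, which does not depend on the pair `(ρ, ρ')`. -/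

section

variable {A : Type*} [Fintype A]

theorem noise_sub_one_div_card (p : A → ℝ) (ρ : ℝ) (a : A) :
    noise p ρ a - 1 / (Fintype.card A : ℝ) = ρ * (p a - 1 / (Fintype.card A : ℝ)) := by
  simp only [noise]
  ring

theorem div_eq_deviation_div_of_noise_eq {p p' : A → ℝ} {ρ ρ' : ℝ} {a : A}
    (ha : p a ≠ 1 / (Fintype.card A : ℝ)) (hρ' : ρ' ≠ 0) (h : noise p ρ = noise p' ρ') :
    ρ / ρ' = (p' a - 1 / (Fintype.card A : ℝ)) / (p a - 1 / (Fintype.card A : ℝ)) := by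
  have hdev := noise_sub_one_div_card p ρ a
  rw [h, noise_sub_one_div_card] at hdev
  rw [div_eq_div_iff hρ' (sub_ne_zero.mpr ha)]
  linarith

end

theorem noise_ratio_const_general {A : Type*} [Fintype A]
    (p p' : A → ℝ)
    (hnonunif : ∃ a, p a ≠ 1 / (Fintype.card A : ℝ))
    {m : ℕ} (hm : 0 < m)
    (ρ ρ' : Fin m → ℝ)
    (hρ' : ∀ i, ρ' i ∈ Set.Ioc (0 : ℝ) 1)
    (heq : ∀ i, noise p (ρ i) = noise p' (ρ' i)) :
    ∀ i, ρ i / ρ' i = ρ ⟨0, hm⟩ / ρ' ⟨0, hm⟩ := by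
  obtain ⟨a, ha⟩ := hnonunif
  intro i
  rw [div_eq_deviation_div_of_noise_eq ha (hρ' i).1.ne' (heq i),
    div_eq_deviation_div_of_noise_eq ha (hρ' _).1.ne' (heq _)]

/-- Ratio constancy across demonstrators: if `p` is a non-uniform distribution, `p'` a
distribution, and `ρ_i, ρ'_i ∈ (0,1]` satisfy `noise p (ρ_i) = noise p' (ρ'_i)` for all
`i ∈ {1,…,m}`, then the ratio `ρ_i/ρ'_i` is independent of `i`. -/
theorem noise_ratio_const {A : Type*} [Fintype A] [Nonempty A]
    (p p' : A → ℝ) (hp : IsDist p) (hp' : IsDist p')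
    (hnonunif : ∃ a, p a ≠ 1 / (Fintype.card A : ℝ))
    {m : ℕ} (hm : 0 < m)
    (ρ ρ' : Fin m → ℝ)
    (hρ : ∀ i, ρ i ∈ Set.Ioc (0 : ℝ) 1) (hρ' : ∀ i, ρ' i ∈ Set.Ioc (0 : ℝ) 1)
    (heq : ∀ i, noise p (ρ i) = noise p' (ρ' i)) :
    ∀ i, ρ i / ρ' i = ρ ⟨0, hm⟩ / ρ' ⟨0, hm⟩ :=
  noise_ratio_const_general p p' hnonunif hm ρ ρ' hρ' heq
end

section
/- Value of the minimal loss: in the demonstrator-model setup, the infimum over all candidate pairs (q, r), with q a policy and r : {1,…,m} × S → (0,1), of NLL(q, r) equals ∑_{i,s} w(i,s) · H(noise(π*(·|s), ρ*(i,s))), the weighted conditional entropy of the demonstrators' action distributions, and this value is attained at the true pair (q, r) = (π*, ρ*). -/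
/-- The negative log-likelihood of a candidate policy `q` and candidate expertise levels `r`. -/
noncomputable def NLL {S A : Type*} [Fintype S] [Fintype A] {m : ℕ}
    (πstar : S → A → ℝ) (ρstar : Fin m → S → ℝ) (w : Fin m → S → ℝ)
    (q : S → A → ℝ) (r : Fin m → S → ℝ) : ℝ :=
  -∑ i, ∑ s, w i s *
    ∑ a, noise (πstar s) (ρstar i s) a * Real.log (noise (q s) (r i s) a)

/-- Shannon entropy of a distribution on a finite set (with the convention `0·log 0 = 0`,
which holds automatically since `Real.log 0 = 0`). -/
noncomputable def shannonH {A : Type*} [Fintype A] (p : A → ℝ) : ℝ :=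
  -∑ a, p a * Real.log (p a)

open Finset Real

lemma mul_log_sub_mul_log_le {p q : ℝ} (hp : 0 ≤ p) (hq : 0 < q) :
    p * log q - p * log p ≤ q - p := by
  rcases hp.eq_or_lt with rfl | hp
  · simpa using hq.le
  calc p * log q - p * log p = p * log (q / p) := by rw [log_div hq.ne' hp.ne', mul_sub]
    _ ≤ p * (q / p - 1) := mul_le_mul_of_nonneg_left (log_le_sub_one_of_pos (by positivity)) hp.le
    _ = q - p := by field_simp

lemma sum_mul_log_le_sum_mul_log {ι : Type*} (s : Finset ι) {p q : ι → ℝ}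
    (hp : ∀ i ∈ s, 0 ≤ p i) (hq : ∀ i ∈ s, 0 < q i) (hpq : ∑ i ∈ s, q i ≤ ∑ i ∈ s, p i) :
    ∑ i ∈ s, p i * log (q i) ≤ ∑ i ∈ s, p i * log (p i) := by
  have key : ∑ i ∈ s, (p i * log (q i) - p i * log (p i)) ≤ ∑ i ∈ s, (q i - p i) :=
    sum_le_sum fun i hi => mul_log_sub_mul_log_le (hp i hi) (hq i hi)
  rw [sum_sub_distrib, sum_sub_distrib] at key
  linarith

section noise

variable {A : Type*} [Fintype A]

lemma noise_pos {p : A → ℝ} (hp : ∀ a, 0 ≤ p a) {ρ : ℝ} (hρ : ρ ∈ Set.Ico (0 : ℝ) 1) (a : A) :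
    0 < noise p ρ a := by
  have hn : (0 : ℝ) < Fintype.card A := by exact_mod_cast Fintype.card_pos_iff.2 ⟨a⟩
  exact add_pos_of_nonneg_of_pos (mul_nonneg hρ.1 (hp a)) (div_pos (sub_pos.2 hρ.2) hn)

lemma sum_noise {p : A → ℝ} (hp : ∑ a, p a = 1) (ρ : ℝ) : ∑ a, noise p ρ a = 1 := by
  -- `∑ p = 1` rules out an empty action set, where `noise` would divide by `0`.
  obtain ⟨a, -, -⟩ := exists_ne_zero_of_sum_ne_zero (hp.trans_ne one_ne_zero)
  have hn : (Fintype.card A : ℝ) ≠ 0 := by exact_mod_cast Fintype.card_pos_iff.2 ⟨a⟩ |>.ne'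
  simp only [noise, sum_add_distrib, ← mul_sum, hp, sum_const, card_univ, nsmul_eq_mul]
  field_simp
  ring

end noise

section NLL

variable {S A : Type*} [Fintype S] [Fintype A] {m : ℕ}
  {πstar : S → A → ℝ} {ρstar : Fin m → S → ℝ} {w : Fin m → S → ℝ}

lemma NLL_self :
    NLL πstar ρstar w πstar ρstar =
      ∑ i, ∑ s, w i s * shannonH (noise (πstar s) (ρstar i s)) := by
  simp [NLL, shannonH, mul_neg, sum_neg_distrib]

lemma NLL_self_le_NLL (hπ : ∀ s, IsDist (πstar s)) (hρ : ∀ i s, ρstar i s ∈ Set.Ioo (0 : ℝ) 1)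
    (hw : ∀ i s, 0 ≤ w i s) {q : S → A → ℝ} (hq : ∀ s, IsDist (q s)) {r : Fin m → S → ℝ}
    (hr : ∀ i s, r i s ∈ Set.Ioo (0 : ℝ) 1) :
    NLL πstar ρstar w πstar ρstar ≤ NLL πstar ρstar w q r := by
  refine neg_le_neg <| sum_le_sum fun i _ => sum_le_sum fun s _ =>
    mul_le_mul_of_nonneg_left ?_ (hw i s)
  refine sum_mul_log_le_sum_mul_log _ (fun a _ => ?_) (fun a _ => ?_) ?_
  · exact (noise_pos (hπ s).1 (Set.Ioo_subset_Ico_self (hρ i s)) a).le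
  · exact noise_pos (hq s).1 (Set.Ioo_subset_Ico_self (hr i s)) a
  · rw [sum_noise (hq s).2, sum_noise (hπ s).2]

end NLL

theorem min_loss_value_general {S A : Type*} [Fintype S] [Fintype A]
    {m : ℕ}
    (πstar : S → A → ℝ) (hπ : ∀ s, IsDist (πstar s))
    (ρstar : Fin m → S → ℝ) (hρ : ∀ i s, ρstar i s ∈ Set.Ioo (0 : ℝ) 1)
    (w : Fin m → S → ℝ) (hw : ∀ i s, 0 ≤ w i s) :
    (⨅ qr : {qr : (S → A → ℝ) × (Fin m → S → ℝ) //
        (∀ s, IsDist (qr.1 s)) ∧ ∀ i s, qr.2 i s ∈ Set.Ioo (0 : ℝ) 1},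
      NLL πstar ρstar w qr.1.1 qr.1.2) =
      ∑ i, ∑ s, w i s * shannonH (noise (πstar s) (ρstar i s)) ∧
    NLL πstar ρstar w πstar ρstar =
      ∑ i, ∑ s, w i s * shannonH (noise (πstar s) (ρstar i s)) := by
  refine ⟨IsLeast.csInf_eq ⟨⟨⟨(πstar, ρstar), hπ, hρ⟩, NLL_self⟩, ?_⟩, NLL_self⟩
  rintro _ ⟨⟨⟨q, r⟩, hq, hr⟩, rfl⟩
  exact NLL_self.symm.trans_le (NLL_self_le_NLL hπ hρ hw hq hr)

/-- Value of the minimal loss: the infimum over all candidate pairs `(q, r)` of `NLL(q,r)`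
equals the weighted conditional entropy `∑_{i,s} w(i,s) · H(noise(π*(·|s), ρ*(i,s)))`,
and this value is attained at the true pair `(π*, ρ*)`. -/
theorem min_loss_value {S A : Type*} [Fintype S] [Fintype A] [Nonempty S] [Nonempty A]
    {m : ℕ} (hm : 1 ≤ m)
    (πstar : S → A → ℝ) (hπ : ∀ s, IsDist (πstar s))
    (ρstar : Fin m → S → ℝ) (hρ : ∀ i s, ρstar i s ∈ Set.Ioo (0 : ℝ) 1)
    (w : Fin m → S → ℝ) (hw : ∀ i s, 0 ≤ w i s) (hw1 : ∑ i, ∑ s, w i s = 1) :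
    (⨅ qr : {qr : (S → A → ℝ) × (Fin m → S → ℝ) //
        (∀ s, IsDist (qr.1 s)) ∧ ∀ i s, qr.2 i s ∈ Set.Ioo (0 : ℝ) 1},
      NLL πstar ρstar w qr.1.1 qr.1.2) =
      ∑ i, ∑ s, w i s * shannonH (noise (πstar s) (ρstar i s)) ∧
    NLL πstar ρstar w πstar ρstar =
      ∑ i, ∑ s, w i s * shannonH (noise (πstar s) (ρstar i s)) :=
  min_loss_value_general πstar hπ ρstar hρ w hw
end
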